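/- If f ∈ ds has a nonzero coefficient of x^{n-1}y (nonzero depth-1 component in weight n), then n is odd. -/

import Mathlib

open List

/-- The multiset (as a list, with multiplicity) of shuffles of two words. -/
def shuffles {α : Type*} : List α → List α → List (List α)
  | [], v => [v]
  | u, [] => [u]
  | x :: u, y :: v =>
      ((shuffles u (y :: v)).map (x :: ·)) ++ ((shuffles (x :: u) v).map (y :: ·))
  termination_by u v => u.length + v.length

/-- The noncommutative polynomial ring `ℚ⟨x,y⟩`, realized as the monoid algebra of
the free monoid on two letters. -/
abbrev NCPoly : Type := MonoidAlgebra ℚ (FreeMonoid (Fin 2))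

/-- The generator `x`. -/
noncomputable def Xg : NCPoly := MonoidAlgebra.of ℚ (FreeMonoid (Fin 2)) (FreeMonoid.of 0)

/-- The generator `y`. -/
noncomputable def Yg : NCPoly := MonoidAlgebra.of ℚ (FreeMonoid (Fin 2)) (FreeMonoid.of 1)

/-- The monomial corresponding to a word in `x,y`. -/
noncomputable def ofW (w : List (Fin 2)) : NCPoly :=
  MonoidAlgebra.of ℚ (FreeMonoid (Fin 2)) (FreeMonoid.ofList w)

/-- The coefficient `(f|w)` of a word `w` in `f`. -/
noncomputable def coeffW (f : NCPoly) (w : List (Fin 2)) : ℚ := f.coeff (FreeMonoid.ofList w)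

/-- The value of the derivation `D_f` (with `D_f(x) = 0`, `D_f(y) = [y,f] = yf - fy`)
on the monomial given by a word. -/
noncomputable def Dword (f : NCPoly) : List (Fin 2) → NCPoly
  | [] => 0
  | a :: w => (if a = 1 then Yg * f - f * Yg else 0) * ofW w
      + (MonoidAlgebra.of ℚ (FreeMonoid (Fin 2)) (FreeMonoid.of a)) * Dword f w

/-- The derivation `D_f` of `ℚ⟨x,y⟩` determined by `D_f(x) = 0`, `D_f(y) = [y,f]`. -/
noncomputable def Dmap (f g : NCPoly) : NCPoly :=
  g.coeff.sum fun w c => c • Dword f (FreeMonoid.toList w)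

/-- The Poisson (Ihara) bracket `{f,g} = [f,g] + D_f(g) - D_g(f)`. -/
noncomputable def pois (f g : NCPoly) : NCPoly :=
  f * g - g * f + Dmap f g - Dmap g f

/-- The multiset (as a list, with multiplicity) of stuffles of two words in the
letters `y_i`, encoded as lists of positive integers. -/
def stuffles : List ℕ+ → List ℕ+ → List (List ℕ+)
  | [], v => [v]
  | u, [] => [u]
  | i :: u, j :: v =>
      ((stuffles u (j :: v)).map (i :: ·)) ++ ((stuffles (i :: u) v).map (j :: ·))
        ++ ((stuffles u v).map ((i + j) :: ·))
  termination_by u v => u.length + v.length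

/-- The word in `x,y` corresponding to a word `y_{a_1} ⋯ y_{a_r}` via `y_i = x^{i-1} y`. -/
def yWord (a : List ℕ+) : List (Fin 2) :=
  (a.map fun i => List.replicate ((i : ℕ) - 1) 0 ++ [1]).flatten

/-- The word `x^{n-1} y`. -/
def xWord (n : ℕ) : List (Fin 2) := List.replicate (n - 1) 0 ++ [1]

/-- The coefficient of `y_{a_1} ⋯ y_{a_r}` in `f_* = π_y(f) + f_corr`, where
`f_corr = Σ_{n≥1} ((-1)^{n-1}/n) (f|x^{n-1}y) yⁿ`. -/
noncomputable def starCoeff (f : NCPoly) (a : List ℕ+) : ℚ :=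
  coeffW f (yWord a) +
    if a ≠ [] ∧ ∀ i ∈ a, i = 1 then
      ((-1 : ℚ)) ^ (a.length - 1) / (a.length : ℚ) * coeffW f (xWord a.length)
    else 0

/-- Membership in the double shuffle space `ds`: degree `≥ 3`, the shuffle relations
(equivalently, `f ∈ Lie[x,y]`), and the stuffle relations for `f_*`. -/
noncomputable def InDS (f : NCPoly) : Prop :=
  (∀ w ∈ f.coeff.support, 3 ≤ (FreeMonoid.toList w).length) ∧
  (∀ u v : List (Fin 2), u ≠ [] → v ≠ [] →
    ((shuffles u v).map (coeffW f)).sum = 0) ∧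
  (∀ a b : List ℕ+, a ≠ [] → b ≠ [] →
    ((stuffles a b).map (starCoeff f)).sum = 0)

/-!
Suppose `n = m + 2` is even (the degree condition excludes `n = 2`, the only even weight where the
correction term of `f_*` enters a depth-two stuffle relation). Put `v(a, b) = (f | x^a y x^b y)`
for `a + b = m` and `c = (f | x^(n-1) y)`. The stuffle relations `y_(a+1) * y_(b+1)` read
`v(a, b) + v(b, a) + c = 0`, and the shuffle relations `x^k y ш x^l y` read
`Σ_a (C(a, k) + C(a, l)) v(a, m - a) = 0`. Since `m` is even, the alternating sum over `k` of the
shuffle relations is `2 v(0, m)`, so `v(0, m) = 0` and `v(m, 0) = -c`. The shuffle relation for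
`k = 0` then gives `Σ v = c`, while the sum of all stuffle relations is `2 Σ v + (m + 1) c = 0`.
Hence `(m + 3) c = 0`.
-/

open Finset

def xPowY (a : ℕ) : List (Fin 2) := List.replicate a 0 ++ [1]

theorem xPowY_zero : xPowY 0 = [1] := rfl

theorem xPowY_succ (a : ℕ) : xPowY (a + 1) = 0 :: xPowY a := rfl

theorem shuffles_xPowY_zero_succ (l : ℕ) :
    shuffles (xPowY 0) (xPowY (l + 1)) =
      [1 :: xPowY (l + 1)] ++ (shuffles (xPowY 0) (xPowY l)).map (0 :: ·) := by
  rw [xPowY_succ, xPowY_zero, shuffles]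
  simp [shuffles]

theorem shuffles_xPowY_succ_zero (k : ℕ) :
    shuffles (xPowY (k + 1)) (xPowY 0) =
      (shuffles (xPowY k) (xPowY 0)).map (0 :: ·) ++ [1 :: xPowY (k + 1)] := by
  rw [xPowY_succ, xPowY_zero, shuffles]
  simp [shuffles]

theorem shuffles_xPowY_succ_succ (k l : ℕ) :
    shuffles (xPowY (k + 1)) (xPowY (l + 1)) =
      (shuffles (xPowY k) (xPowY (l + 1))).map (0 :: ·) ++
        (shuffles (xPowY (k + 1)) (xPowY l)).map (0 :: ·) := by
  rw [xPowY_succ, xPowY_succ, shuffles]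

theorem choose_succ_succ_of_le {a k : ℕ} (h : a ≤ k) : (a + 1).choose (k + 1) = a.choose k := by
  rw [Nat.choose_succ_succ', Nat.choose_eq_zero_of_lt (Nat.lt_succ_of_le h), add_zero]

theorem sum_map_shuffles_xPowY {M : Type*} [AddCommMonoid M] (k l : ℕ) (g : List (Fin 2) → M) :
    ((shuffles (xPowY k) (xPowY l)).map g).sum =
      ∑ p ∈ antidiagonal (k + l), (p.1.choose k + p.1.choose l) • g (xPowY p.1 ++ xPowY p.2) := by
  induction k generalizing l g with
  | zero =>
    induction l generalizing g with
    | zero => simp [xPowY, shuffles, two_nsmul]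
    | succ l ih =>
      rw [zero_add] at ih ⊢
      rw [shuffles_xPowY_zero_succ, List.map_append, List.sum_append, List.map_map, ih,
        Nat.sum_antidiagonal_succ]
      congr 1
      · simp [xPowY]
      · refine sum_congr rfl fun p hp => ?_
        rw [choose_succ_succ_of_le (Finset.HasAntidiagonal.antidiagonal.fst_le hp),
          Nat.choose_zero_right, Nat.choose_zero_right]
        rfl
  | succ k ihk =>
    induction l generalizing g with
    | zero =>
      have ih := ihk 0
      rw [add_zero] at ih ⊢
      rw [shuffles_xPowY_succ_zero, List.map_append, List.sum_append, List.map_map, ih,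
        Nat.sum_antidiagonal_succ, add_comm]
      congr 1
      · simp [xPowY]
      · refine sum_congr rfl fun p hp => ?_
        rw [choose_succ_succ_of_le (Finset.HasAntidiagonal.antidiagonal.fst_le hp),
          Nat.choose_zero_right, Nat.choose_zero_right]
        rfl
    | succ l ihl =>
      rw [show k + 1 + l = k + (l + 1) by omega] at ihl
      rw [shuffles_xPowY_succ_succ, List.map_append, List.sum_append, List.map_map, List.map_map,
        ihk, ihl, ← sum_add_distrib, show k + 1 + (l + 1) = k + (l + 1) + 1 by omega,
        Nat.sum_antidiagonal_succ]
      simp only [Nat.choose_zero_succ, add_zero, zero_smul, zero_add, ← add_smul, Function.comp_def,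
        Nat.choose_succ_succ']
      refine sum_congr rfl fun p _ => ?_
      congr 1
      ring

theorem sum_antidiagonal_neg_one_pow_mul_choose {a m : ℕ} (h : a ≤ m) :
    ∑ p ∈ antidiagonal m, (-1 : ℤ) ^ p.1 * a.choose p.1 = if a = 0 then 1 else 0 := by
  rw [Nat.sum_antidiagonal_eq_sum_range_succ_mk]
  cases a with
  | zero => simp [Finset.sum_range_succ']
  | succ a =>
    rw [Int.alternating_sum_range_choose_eq_choose, Nat.choose_eq_zero_of_lt (by omega)]
    simp

theorem sum_antidiagonal_neg_one_pow_mul_choose_snd {a m : ℕ} (hm : Even m) (h : a ≤ m) :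
    ∑ p ∈ antidiagonal m, (-1 : ℤ) ^ p.1 * a.choose p.2 = if a = 0 then 1 else 0 := by
  rw [← sum_antidiagonal_neg_one_pow_mul_choose h, ← Nat.sum_antidiagonal_swap]
  refine sum_congr rfl fun p hp => ?_
  rw [HasAntidiagonal.mem_antidiagonal] at hp
  rw [Prod.fst_swap, Prod.snd_swap, neg_one_pow_congr]
  rw [← hp, Nat.even_add] at hm
  exact hm.symm

theorem sum_antidiagonal_neg_one_pow_zsmul_shuffle {M : Type*} [AddCommGroup M] {m : ℕ}
    (hm : Even m) (v : ℕ × ℕ → M) :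
    ∑ p ∈ antidiagonal m, (-1 : ℤ) ^ p.1 •
      ∑ q ∈ antidiagonal m, (q.1.choose p.1 + q.1.choose p.2) • v q = 2 • v (0, m) := by
  calc _ = ∑ q ∈ antidiagonal m,
        (∑ p ∈ antidiagonal m, (-1 : ℤ) ^ p.1 * (q.1.choose p.1 + q.1.choose p.2 : ℕ)) • v q := by
        simp only [Finset.smul_sum, Finset.sum_smul, mul_smul, natCast_zsmul]
        exact sum_comm
    _ = ∑ q ∈ antidiagonal m, (if q.1 = 0 then 2 else 0 : ℤ) • v q := by
        refine sum_congr rfl fun q hq => ?_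
        have hq := Finset.HasAntidiagonal.antidiagonal.fst_le hq
        push_cast
        rw [sum_congr rfl fun p _ => mul_add _ _ _, sum_add_distrib,
          sum_antidiagonal_neg_one_pow_mul_choose hq,
          sum_antidiagonal_neg_one_pow_mul_choose_snd hm hq]
        split_ifs <;> rfl
    _ = 2 • v (0, m) := by
        rw [sum_eq_single (0, m)]
        · simp [two_zsmul, two_nsmul]
        · rintro q hq hq0
          rw [if_neg, zero_smul]
          rintro h
          exact hq0 (Prod.ext h (by simpa [h] using hq))
        · simp

/-- Read `v (a, b)` as the coefficient of `x^a y x^b y` and `c` as that of `x^(m+1) y`. -/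
theorem eq_zero_of_stuffle_of_shuffle {M : Type*} [AddCommGroup M] [IsAddTorsionFree M]
    {m : ℕ} (hm : Even m) (v : ℕ × ℕ → M) (c : M)
    (hstuffle : ∀ p ∈ antidiagonal m, v p + v p.swap + c = 0)
    (hshuffle : ∀ p ∈ antidiagonal m,
      ∑ q ∈ antidiagonal m, (q.1.choose p.1 + q.1.choose p.2) • v q = 0) :
    c = 0 := by
  have hv0 : v (0, m) = 0 := by
    rw [← two_nsmul_eq_zero, ← sum_antidiagonal_neg_one_pow_zsmul_shuffle hm]
    exact Finset.sum_eq_zero fun p hp => by rw [hshuffle p hp, smul_zero]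
  have hvm : v (m, 0) = -c := by
    simpa [hv0, add_eq_zero_iff_eq_neg] using hstuffle (0, m) (by simp)
  have hchoose : ∑ q ∈ antidiagonal m, q.1.choose m • v q = v (m, 0) := by
    rw [sum_eq_single (m, 0)]
    · simp
    · rintro q hq hqm
      have hq := mem_antidiagonal.mp hq
      rw [Nat.choose_eq_zero_of_lt, zero_smul]
      exact lt_of_le_of_ne (by omega) fun h => hqm (Prod.ext h (by simp; omega))
    · simp
  have hsum : ∑ q ∈ antidiagonal m, v q = c := by
    have := hshuffle (m, 0) (by simp)
    simp only [Nat.choose_zero_right, add_smul, one_smul, sum_add_distrib, hchoose, hvm] at this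
    rwa [neg_add_eq_zero, eq_comm] at this
  have htotal := Finset.sum_eq_zero hstuffle
  rw [sum_add_distrib, sum_add_distrib, Nat.sum_antidiagonal_swap, hsum, sum_const,
    Nat.card_antidiagonal] at htotal
  rw [← nsmul_eq_zero_iff_right (show m + 3 ≠ 0 by omega), ← htotal]
  module

theorem yWord_nil : yWord [] = [] := rfl

theorem yWord_succPNat_cons (a : ℕ) (w : List ℕ+) :
    yWord (a.succPNat :: w) = xPowY a ++ yWord w := by
  simp [yWord, xPowY]

theorem stuffles_singleton (i j : ℕ+) : stuffles [i] [j] = [[i, j], [j, i], [i + j]] := by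
  simp [stuffles]

theorem starCoeff_of_exists_ne_one {f : NCPoly} {a : List ℕ+} (ha : ∃ i ∈ a, i ≠ 1) :
    starCoeff f a = coeffW f (yWord a) := by
  simp [starCoeff, ha]

namespace InDS

variable {f : NCPoly}

theorem three_le_length (hf : InDS f) {w : List (Fin 2)} (hw : coeffW f w ≠ 0) :
    3 ≤ w.length := by
  simpa using hf.1 (FreeMonoid.ofList w) (Finsupp.mem_support_iff.mpr hw)

theorem sum_shuffle_xPowY (hf : InDS f) (k l : ℕ) :
    ∑ q ∈ antidiagonal (k + l), (q.1.choose k + q.1.choose l) • coeffW f (xPowY q.1 ++ xPowY q.2)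
      = 0 := by
  rw [← sum_map_shuffles_xPowY]
  exact hf.2.1 _ _ (by simp [xPowY]) (by simp [xPowY])

theorem stuffle_xPowY (hf : InDS f) {a b : ℕ} (hab : a + b ≠ 0) :
    coeffW f (xPowY a ++ xPowY b) + coeffW f (xPowY b ++ xPowY a) + coeffW f (xPowY (a + b + 1))
      = 0 := by
  have h := hf.2.2 [a.succPNat] [b.succPNat] (by simp) (by simp)
  have hsum : a.succPNat + b.succPNat = (a + b + 1).succPNat := by
    apply PNat.eq; simp; omega
  have hne : a.succPNat ≠ 1 ∨ b.succPNat ≠ 1 := by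
    simp [← PNat.coe_eq_one_iff]; omega
  rw [stuffles_singleton, hsum] at h
  simp only [List.map_cons, List.map_nil, List.sum_cons, List.sum_nil, add_zero] at h
  rw [starCoeff_of_exists_ne_one (by simpa using hne),
    starCoeff_of_exists_ne_one (by simpa [or_comm] using hne),
    starCoeff_of_exists_ne_one (by simp [← PNat.coe_eq_one_iff])] at h
  simpa only [yWord_succPNat_cons, yWord_nil, List.append_nil, add_assoc] using h

end InDS

theorem ds_depth_one_odd_general (f : NCPoly) (hf : InDS f) (n : ℕ)
    (h : coeffW f (xWord n) ≠ 0) : Odd n := by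
  have h3 : 3 ≤ n := by have := hf.three_le_length h; simp [xWord] at this; omega
  obtain ⟨m, rfl⟩ : ∃ m, n = m + 2 := ⟨n - 2, by omega⟩
  have hc : coeffW f (xPowY (m + 1)) ≠ 0 := h
  by_contra hodd
  have hm : Even m := by simpa [Nat.even_add, parity_simps] using hodd
  refine hc (eq_zero_of_stuffle_of_shuffle hm (fun p => coeffW f (xPowY p.1 ++ xPowY p.2)) _
    (fun p hp => ?_) (fun p hp => ?_))
  · rw [HasAntidiagonal.mem_antidiagonal] at hp
    simpa [hp] using hf.stuffle_xPowY (a := p.1) (b := p.2) (by omega)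
  · rw [HasAntidiagonal.mem_antidiagonal] at hp
    simpa [hp] using hf.sum_shuffle_xPowY p.1 p.2

/-- if `f ∈ ds` has a nonzero coefficient of `x^{n-1} y`, then `n` is odd. -/
theorem ds_depth_one_odd (f : NCPoly) (hf : InDS f) (n : ℕ) (hn : 1 ≤ n)
    (h : coeffW f (xWord n) ≠ 0) : Odd n :=
  ds_depth_one_odd_general f hf n h
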